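/- Let (X, μ) be a measure space with finite total mass m₀ := μ(X) ∈ (0, ∞), let p be real with 1 < p < 2, and let v : X → ℝ be a function in L^p(μ) with ∫_X v dμ = 0. Then ∫_X |1 + v|^p dμ ≤ m₀ + (1 + p (p−1)^{p−1}) ∫_X |v|^p dμ. -/

import Mathlib

open MeasureTheory Real

/-!
Pointwise, `|1 + t| ^ p ≤ 1 + p t + C |t| ^ p` with `C = 1 + p (p - 1) ^ (p - 1)`; integrating it,
the linear term vanishes because `v` has mean zero. For `t ≥ -1` the pointwise bound holds even
with `C = 1`: the difference of the two sides vanishes at `t = 0` and is monotone in `|t|`,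
because `x ↦ x ^ (p - 1)` is subadditive for `p ≤ 2`. For `t < -1` we have `|1 + t| ≤ |t|`,
and the linear term is absorbed by the Young-type inequality `p s ≤ 1 + (p - 1) ^ (p - 1) s ^ p`,
which is Bernoulli's inequality at `(p - 1) s`.
-/

theorem mul_le_sub_one_add_rpow {p u : ℝ} (hp : 1 ≤ p) (hu : 0 ≤ u) :
    p * u ≤ p - 1 + u ^ p := by
  have := one_add_mul_self_le_rpow_one_add (s := u - 1) (by linarith) hp
  rw [add_sub_cancel] at this
  linarith

theorem mul_le_one_add_mul_rpow {p s : ℝ} (hp : 1 < p) (hs : 0 ≤ s) :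
    p * s ≤ 1 + (p - 1) ^ (p - 1) * s ^ p := by
  have hp0 : 0 < p - 1 := sub_pos.2 hp
  have key := mul_le_sub_one_add_rpow hp.le (mul_nonneg hp0.le hs)
  have hpow : (p - 1) ^ p = (p - 1) ^ (p - 1) * (p - 1) := by
    rw [← rpow_add_one hp0.ne', sub_add_cancel]
  rw [mul_rpow hp0.le hs, hpow] at key
  refine le_of_mul_le_mul_left ?_ hp0
  linarith

theorem one_add_rpow_le {p t : ℝ} (hp1 : 1 ≤ p) (hp2 : p ≤ 2) (ht : 0 ≤ t) :
    (1 + t) ^ p ≤ 1 + p * t + t ^ p := by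
  let F : ℝ → ℝ := fun x ↦ 1 + p * x + x ^ p - (1 + x) ^ p
  have hF : ∀ x, HasDerivAt F (p * (1 + x ^ (p - 1) - (1 + x) ^ (p - 1))) x := fun x ↦
    ((((hasDerivAt_id' x).const_mul p).const_add 1).add
      (hasDerivAt_rpow_const (Or.inr hp1))).sub
      (((hasDerivAt_id' x).const_add 1).rpow_const (Or.inr hp1)) |>.congr_deriv (by ring)
  have hmono : MonotoneOn F (Set.Ici 0) := by
    refine monotoneOn_of_hasDerivWithinAt_nonneg (convex_Ici 0)
      (fun x _ ↦ (hF x).continuousAt.continuousWithinAt) (fun x _ ↦ (hF x).hasDerivWithinAt) ?_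
    intro x hx
    rw [interior_Ici] at hx
    have := rpow_add_le_add_rpow zero_le_one hx.le (sub_nonneg.2 hp1) (by linarith)
    rw [one_rpow] at this
    exact mul_nonneg (by linarith) (by linarith)
  have := hmono Set.self_mem_Ici ht ht
  simp only [F, zero_rpow (by linarith : p ≠ 0), one_rpow, add_zero, mul_zero] at this
  linarith

theorem one_sub_rpow_le {p s : ℝ} (hp1 : 1 ≤ p) (hp2 : p ≤ 2) (hs0 : 0 ≤ s)
    (hs1 : s ≤ 1) :
    (1 - s) ^ p ≤ 1 - p * s + s ^ p := by
  let G : ℝ → ℝ := fun x ↦ 1 - p * x + x ^ p - (1 - x) ^ p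
  have hG : ∀ x, HasDerivAt G (p * (x ^ (p - 1) + (1 - x) ^ (p - 1) - 1)) x := fun x ↦
    ((((hasDerivAt_id' x).const_mul p).const_sub 1).add
      (hasDerivAt_rpow_const (Or.inr hp1))).sub
      (((hasDerivAt_id' x).const_sub 1).rpow_const (Or.inr hp1)) |>.congr_deriv (by ring)
  have hmono : MonotoneOn G (Set.Icc 0 1) := by
    refine monotoneOn_of_hasDerivWithinAt_nonneg (convex_Icc 0 1)
      (fun x _ ↦ (hG x).continuousAt.continuousWithinAt) (fun x _ ↦ (hG x).hasDerivWithinAt) ?_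
    intro x hx
    rw [interior_Icc] at hx
    have := rpow_add_le_add_rpow hx.1.le (sub_nonneg.2 hx.2.le) (sub_nonneg.2 hp1) (by linarith)
    rw [add_sub_cancel, one_rpow] at this
    exact mul_nonneg (by linarith) (by linarith)
  have := hmono (Set.left_mem_Icc.2 zero_le_one) ⟨hs0, hs1⟩ hs0
  simp only [G, zero_rpow (by linarith : p ≠ 0), one_rpow, sub_zero, mul_zero, add_zero] at this
  linarith

theorem abs_one_add_rpow_le {p : ℝ} (hp1 : 1 < p) (hp2 : p ≤ 2) (t : ℝ) :
    |1 + t| ^ p ≤ 1 + p * t + (1 + p * (p - 1) ^ (p - 1)) * |t| ^ p := by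
  have hK : 0 ≤ (p - 1) ^ (p - 1) * |t| ^ p := by
    have := sub_pos.2 hp1
    positivity
  have hpK : (p - 1) ^ (p - 1) * |t| ^ p ≤ p * ((p - 1) ^ (p - 1) * |t| ^ p) :=
    le_mul_of_one_le_left hK hp1.le
  rcases le_or_gt 0 t with ht | ht
  · rw [abs_of_nonneg (by linarith), abs_of_nonneg ht] at *
    linarith [one_add_rpow_le hp1.le hp2 ht]
  rw [abs_of_neg ht] at *
  rcases le_or_gt (-1) t with ht1 | ht1
  · have h := one_sub_rpow_le hp1.le hp2 (neg_nonneg.2 ht.le) (by linarith)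
    rw [sub_neg_eq_add, ← abs_of_nonneg (by linarith : 0 ≤ 1 + t)] at h
    linarith
  · have h1 : |1 + t| ^ p ≤ (-t) ^ p := by
      refine rpow_le_rpow (abs_nonneg _) ?_ (by linarith)
      rw [abs_of_neg (by linarith)]
      linarith
    linarith [mul_le_one_add_mul_rpow hp1 (neg_nonneg.2 ht.le)]

theorem MeasureTheory.MemLp.integrable_abs_rpow {X : Type*} [MeasurableSpace X] {μ : Measure X}
    {f : X → ℝ} {p : ℝ} (hp : 0 < p) (hf : MemLp f (ENNReal.ofReal p) μ) :
    Integrable (fun x ↦ |f x| ^ p) μ := by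
  simpa [ENNReal.toReal_ofReal hp.le] using
    hf.integrable_norm_rpow (ENNReal.ofReal_pos.2 hp).ne' ENNReal.ofReal_ne_top

theorem stmt_11_general {X : Type*} [MeasurableSpace X] (μ : Measure X)
    [IsFiniteMeasure μ] (m₀ : ℝ) (hm₀ : m₀ = (μ Set.univ).toReal)
    (p : ℝ) (hp1 : 1 < p) (hp2 : p < 2) (v : X → ℝ)
    (hv : MemLp v (ENNReal.ofReal p) μ)
    (hmean : ∫ x, v x ∂μ = 0) :
    ∫ x, |1 + v x| ^ p ∂μ ≤
      m₀ + (1 + p * (p - 1) ^ (p - 1)) * ∫ x, |v x| ^ p ∂μ := by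
  have hp0 : 0 < p := zero_lt_one.trans hp1
  have hv_int : Integrable v μ := hv.integrable (ENNReal.one_le_ofReal.2 hp1.le)
  have hv_rpow := hv.integrable_abs_rpow hp0
  have h1v_rpow : Integrable (fun x ↦ |1 + v x| ^ p) μ :=
    ((memLp_const (1 : ℝ)).add hv).integrable_abs_rpow hp0
  set C := 1 + p * (p - 1) ^ (p - 1)
  have h1v_int : Integrable (fun x ↦ 1 + p * v x) μ :=
    (integrable_const 1).add (hv_int.const_mul p)
  calc ∫ x, |1 + v x| ^ p ∂μ ≤ ∫ x, (1 + p * v x + C * |v x| ^ p) ∂μ :=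
        integral_mono h1v_rpow (h1v_int.add (hv_rpow.const_mul C))
          fun x ↦ abs_one_add_rpow_le hp1 hp2.le (v x)
    _ = m₀ + C * ∫ x, |v x| ^ p ∂μ := by
        rw [integral_add h1v_int (hv_rpow.const_mul C),
          integral_add (integrable_const 1) (hv_int.const_mul p), integral_const,
          integral_const_mul, integral_const_mul, hmean, hm₀]
        simp [Measure.real]

theorem stmt_11 {X : Type*} [MeasurableSpace X] (μ : Measure X)
    [IsFiniteMeasure μ] (m₀ : ℝ) (hm₀ : m₀ = (μ Set.univ).toReal)
    (hm₀pos : 0 < m₀) (p : ℝ) (hp1 : 1 < p) (hp2 : p < 2) (v : X → ℝ)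
    (hv : MemLp v (ENNReal.ofReal p) μ)
    (hmean : ∫ x, v x ∂μ = 0) :
    ∫ x, |1 + v x| ^ p ∂μ ≤
      m₀ + (1 + p * (p - 1) ^ (p - 1)) * ∫ x, |v x| ^ p ∂μ :=
  stmt_11_general μ m₀ hm₀ p hp1 hp2 v hv hmean
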